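/- arXiv:1011.1825 — 3 statements merged into one kernel-verified Lean document; each statement's English description precedes it below -/
import Mathlib

section
/- The primorial numbers are exactly the left-to-right maxima (champion numbers) of the function x ↦ Ψ(x)/x: that is, a positive integer n is a primorial if and only if Ψ(m)/m < Ψ(n)/n for all positive integers m < n. -/
open Finset Real Filter

/-- Dedekind psi function `Ψ(n) = n ∏_{p ∣ n} (1 + 1/p)`. -/
noncomputable def dedekindPsi (n : ℕ) : ℝ := n * ∏ p ∈ n.primeFactors, (1 + 1/(p:ℝ))

/-- `nthPrime n` is the n-th prime `p_n` (1-indexed: `nthPrime 1 = 2`). -/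
noncomputable def nthPrime (n : ℕ) : ℕ := Nat.nth Nat.Prime (n - 1)

/-- `primorialN k = N_k`, the product of the first `k` primes. -/
noncomputable def primorialN (k : ℕ) : ℕ := ∏ i ∈ Finset.range k, Nat.nth Nat.Prime i

private lemma primesInf : {n | Nat.Prime n}.Infinite := Nat.infinite_setOf_prime

private lemma nth_prime_prime (i : ℕ) : (Nat.nth Nat.Prime i).Prime :=
  Nat.nth_mem_of_infinite primesInf i

/-- key counting lemma: the max of a set of `c` primes is at least the `c`-th prime. -/
private lemma nth_le_max' (S : Finset ℕ) (hS : ∀ p ∈ S, p.Prime) (hne : S.Nonempty) :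
    Nat.nth Nat.Prime (S.card - 1) ≤ S.max' hne := by
  set M := S.max' hne with hM
  have hMp : M.Prime := hS _ (S.max'_mem hne)
  have hsub : S ⊆ (Finset.range (M + 1)).filter Nat.Prime := by
    intro x hx
    simp only [Finset.mem_filter, Finset.mem_range, Nat.lt_succ_iff]
    exact ⟨S.le_max' x hx, hS x hx⟩
  have hcard : S.card ≤ Nat.count Nat.Prime (M + 1) := by
    rw [Nat.count_eq_card_filter_range]
    exact Finset.card_le_card hsub
  have hcount : Nat.count Nat.Prime (M + 1) = Nat.count Nat.Prime M + 1 := by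
    rw [Nat.count_succ, if_pos hMp]
  have h1 : S.card - 1 ≤ Nat.count Nat.Prime M := by omega
  calc Nat.nth Nat.Prime (S.card - 1) ≤ Nat.nth Nat.Prime (Nat.count Nat.Prime M) :=
        Nat.nth_monotone primesInf h1
    _ = M := Nat.nth_count hMp

private lemma primorial_le_prod (S : Finset ℕ) (hS : ∀ p ∈ S, p.Prime) :
    primorialN S.card ≤ ∏ p ∈ S, p := by
  induction' hk : S.card with k ih generalizing S
  · rw [Finset.card_eq_zero.mp hk]
    simp [primorialN]
  · have hne : S.Nonempty := Finset.card_pos.mp (hk ▸ k.succ_pos)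
    set M := S.max' hne with hMdef
    have hMmem := S.max'_mem hne
    have hcard' : (S.erase M).card = k := by rw [Finset.card_erase_of_mem hMmem, hk]; omega
    have hIH := ih (S.erase M) (fun p hp => hS p (Finset.mem_of_mem_erase hp)) hcard'
    have hnth : Nat.nth Nat.Prime k ≤ M := by
      have h := nth_le_max' S hS hne
      rw [hk] at h
      simpa using h
    calc primorialN (k + 1) = primorialN k * Nat.nth Nat.Prime k := by
          simp [primorialN, Finset.prod_range_succ]
      _ ≤ (∏ p ∈ S.erase M, p) * M := Nat.mul_le_mul (hcard' ▸ hIH) hnth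
      _ = M * ∏ p ∈ S.erase M, p := mul_comm _ _
      _ = ∏ p ∈ S, p := Finset.mul_prod_erase S (fun p => p) hMmem

private lemma prod_ratio_le (S : Finset ℕ) (hS : ∀ p ∈ S, p.Prime) :
    ∏ p ∈ S, (1 + 1/(p:ℝ)) ≤ ∏ i ∈ Finset.range S.card, (1 + 1/(Nat.nth Nat.Prime i : ℝ)) := by
  induction' hk : S.card with k ih generalizing S
  · rw [Finset.card_eq_zero.mp hk]; simp
  · have hne : S.Nonempty := Finset.card_pos.mp (hk ▸ k.succ_pos)
    set M := S.max' hne with hMdef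
    have hMmem := S.max'_mem hne
    have hcard' : (S.erase M).card = k := by rw [Finset.card_erase_of_mem hMmem, hk]; omega
    have hIH := ih (S.erase M) (fun p hp => hS p (Finset.mem_of_mem_erase hp)) hcard'
    have hnth : Nat.nth Nat.Prime k ≤ M := by
      have h := nth_le_max' S hS hne
      rw [hk] at h
      simpa using h
    have hnthpos : (0:ℝ) < (Nat.nth Nat.Prime k : ℝ) := by
      exact_mod_cast (nth_prime_prime k).pos
    have hfac : (1 + 1/(M:ℝ)) ≤ 1 + 1/(Nat.nth Nat.Prime k : ℝ) := by
      have : (1:ℝ)/(M:ℝ) ≤ 1/(Nat.nth Nat.Prime k : ℝ) := by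
        apply one_div_le_one_div_of_le hnthpos
        exact_mod_cast hnth
      linarith
    have hpos : (0:ℝ) ≤ ∏ p ∈ S.erase M, (1 + 1/(p:ℝ)) := by
      apply Finset.prod_nonneg
      intro p hp
      have : (0:ℝ) ≤ 1/(p:ℝ) := by positivity
      linarith
    calc ∏ p ∈ S, (1 + 1/(p:ℝ)) = (1 + 1/(M:ℝ)) * ∏ p ∈ S.erase M, (1 + 1/(p:ℝ)) :=
          (Finset.mul_prod_erase S _ hMmem).symm
      _ ≤ (1 + 1/(Nat.nth Nat.Prime k : ℝ)) * ∏ i ∈ Finset.range k, (1 + 1/(Nat.nth Nat.Prime i : ℝ)) := by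
          apply mul_le_mul hfac (hcard' ▸ hIH) hpos
          positivity
      _ = ∏ i ∈ Finset.range (k+1), (1 + 1/(Nat.nth Nat.Prime i : ℝ)) := by
          rw [Finset.prod_range_succ]; ring

private lemma primeFactors_primorialN (k : ℕ) :
    (primorialN k).primeFactors = (Finset.range k).image (Nat.nth Nat.Prime) := by
  have hinj : Set.InjOn (Nat.nth Nat.Prime) (Finset.range k) :=
    fun a _ b _ h => Nat.nth_injective primesInf h
  have : primorialN k = ∏ p ∈ (Finset.range k).image (Nat.nth Nat.Prime), p := by
    rw [Finset.prod_image (fun a ha b hb h => hinj ha hb h)]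
    rfl
  rw [this, Nat.primeFactors_prod]
  intro p hp
  obtain ⟨i, _, rfl⟩ := Finset.mem_image.mp hp
  exact nth_prime_prime i

private lemma primorialN_pos (k : ℕ) : 0 < primorialN k :=
  Finset.prod_pos fun i _ => (nth_prime_prime i).pos

private lemma primorialN_mono : Monotone primorialN := by
  intro a b hab
  apply Finset.prod_le_prod_of_subset_of_one_le' (Finset.range_subset_range.mpr hab)
  intro i _ _
  exact (nth_prime_prime i).one_lt.le

private lemma psi_div (m : ℕ) (hm : 1 ≤ m) :
    dedekindPsi m / m = ∏ p ∈ m.primeFactors, (1 + 1/(p:ℝ)) := by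
  have : (m:ℝ) ≠ 0 := Nat.cast_ne_zero.mpr (by omega)
  rw [dedekindPsi, mul_comm, mul_div_assoc, div_self this, mul_one]

private lemma psi_div_primorial (k : ℕ) :
    dedekindPsi (primorialN k) / (primorialN k) =
      ∏ i ∈ Finset.range k, (1 + 1/(Nat.nth Nat.Prime i : ℝ)) := by
  rw [psi_div _ (primorialN_pos k), primeFactors_primorialN,
    Finset.prod_image (fun a _ b _ h => Nat.nth_injective primesInf h)]

theorem primorial_iff_champion (n : ℕ) (hn : 1 ≤ n) :
    (∃ k, n = primorialN k) ↔
      ∀ m : ℕ, 1 ≤ m → m < n →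
        dedekindPsi m / m < dedekindPsi n / n := by
  constructor
  · rintro ⟨k, rfl⟩ m hm hmn
    set j := m.primeFactors.card with hj
    have hprimes : ∀ p ∈ m.primeFactors, p.Prime := fun p hp => Nat.prime_of_mem_primeFactors hp
    have hNj : primorialN j ≤ m := by
      calc primorialN j ≤ ∏ p ∈ m.primeFactors, p := primorial_le_prod _ hprimes
        _ ≤ m := Nat.le_of_dvd (by omega) (Nat.prod_primeFactors_dvd m)
    have hjk : j < k := by
      by_contra h
      push_neg at h
      have := primorialN_mono h
      omega
    rw [psi_div m hm, psi_div_primorial k]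
    have h1 : ∏ p ∈ m.primeFactors, (1 + 1/(p:ℝ)) ≤
        ∏ i ∈ Finset.range j, (1 + 1/(Nat.nth Nat.Prime i : ℝ)) := prod_ratio_le _ hprimes
    have h2 : ∏ i ∈ Finset.range j, (1 + 1/(Nat.nth Nat.Prime i : ℝ)) <
        ∏ i ∈ Finset.range k, (1 + 1/(Nat.nth Nat.Prime i : ℝ)) := by
      rw [← Finset.prod_range_mul_prod_Ico _ hjk.le]
      have hQ : (1:ℝ) < ∏ i ∈ Finset.Ico j k, (1 + 1/(Nat.nth Nat.Prime i : ℝ)) := by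
        calc (1:ℝ) = ∏ _i ∈ Finset.Ico j k, (1:ℝ) := by simp
          _ < ∏ i ∈ Finset.Ico j k, (1 + 1/(Nat.nth Nat.Prime i : ℝ)) := by
            apply Finset.prod_lt_prod_of_nonempty
            · intro i _; norm_num
            · intro i _
              have : (0:ℝ) < 1/(Nat.nth Nat.Prime i : ℝ) := by
                have := (nth_prime_prime i).pos
                positivity
              linarith
            · exact ⟨j, Finset.mem_Ico.mpr ⟨le_refl j, hjk⟩⟩
      have hpos : (0:ℝ) < ∏ i ∈ Finset.range j, (1 + 1/(Nat.nth Nat.Prime i : ℝ)) := by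
        apply Finset.prod_pos
        intro i _
        have := (nth_prime_prime i).pos
        positivity
      nlinarith
    linarith
  · intro h
    set j := n.primeFactors.card with hj
    refine ⟨j, ?_⟩
    have hprimes : ∀ p ∈ n.primeFactors, p.Prime := fun p hp => Nat.prime_of_mem_primeFactors hp
    have hNj : primorialN j ≤ n := by
      calc primorialN j ≤ ∏ p ∈ n.primeFactors, p := primorial_le_prod _ hprimes
        _ ≤ n := Nat.le_of_dvd (by omega) (Nat.prod_primeFactors_dvd n)
    rcases eq_or_lt_of_le hNj with heq | hlt
    · exact heq.symm
    · exfalso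
      have hch := h (primorialN j) (primorialN_pos j) hlt
      rw [psi_div_primorial j, psi_div n hn] at hch
      have := prod_ratio_le n.primeFactors hprimes
      rw [← hj] at this
      linarith
end

section
/- For every integer n ≥ 2, ∏_{p > p_n} (1 - 1/p²)^{-1} ≤ exp(2/p_n), where the product runs over all primes greater than the n-th prime p_n. -/
open Finset Real Filter

/-!
Each factor satisfies `(1 - 1/k²)⁻¹ ≤ exp (2/k²)`, so the product over any finite set of
integers `k > m` is at most `exp (2 ∑ 1/k²)`, and telescoping `1/k² ≤ 1/(k-1) - 1/k` bounds
that sum by `1/m`. The infinite product is a supremum of such finite products (or `1` when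
it does not converge).
-/

lemma inv_one_sub_le_exp_two_mul {x : ℝ} (hx0 : 0 ≤ x) (hx : x ≤ 1 / 2) :
    (1 - x)⁻¹ ≤ exp (2 * x) := by
  have hpos : 0 < 1 - x := by linarith
  calc (1 - x)⁻¹ ≤ 2 * x + 1 := by
        rw [inv_le_iff_one_le_mul₀ hpos]
        nlinarith
    _ ≤ exp (2 * x) := add_one_le_exp _

lemma sum_inv_sq_le_inv_of_forall_lt {m : ℕ} (hm : m ≠ 0) {s : Finset ℕ}
    (hs : ∀ k ∈ s, m < k) : ∑ k ∈ s, ((k : ℝ) ^ 2)⁻¹ ≤ (m : ℝ)⁻¹ := by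
  set N := max m (s.sup id)
  have hsub : s ⊆ Ioc m N := fun k hk =>
    mem_Ioc.2 ⟨hs k hk, le_max_of_le_right (le_sup (f := id) hk)⟩
  calc ∑ k ∈ s, ((k : ℝ) ^ 2)⁻¹ ≤ ∑ k ∈ Ioc m N, ((k : ℝ) ^ 2)⁻¹ :=
        sum_le_sum_of_subset_of_nonneg hsub fun _ _ _ => by positivity
    _ ≤ (m : ℝ)⁻¹ - (N : ℝ)⁻¹ := sum_Ioc_inv_sq_le_sub hm (le_max_left _ _)
    _ ≤ (m : ℝ)⁻¹ := sub_le_self _ (by positivity)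

lemma prod_inv_one_sub_inv_sq_le_exp {m : ℕ} (hm : m ≠ 0) {s : Finset ℕ}
    (hs : ∀ k ∈ s, m < k) : ∏ k ∈ s, (1 - 1 / (k : ℝ) ^ 2)⁻¹ ≤ exp (2 / m) := by
  have hfactor : ∀ k ∈ s, 0 ≤ 1 / (k : ℝ) ^ 2 ∧ 1 / (k : ℝ) ^ 2 ≤ 1 / 2 := fun k hk => by
    have hk : (2 : ℝ) ≤ k := by
      have := hs k hk
      exact_mod_cast (by omega : 2 ≤ k)
    exact ⟨by positivity, one_div_le_one_div_of_le two_pos (by nlinarith)⟩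
  calc ∏ k ∈ s, (1 - 1 / (k : ℝ) ^ 2)⁻¹ ≤ ∏ k ∈ s, exp (2 * (1 / (k : ℝ) ^ 2)) :=
        prod_le_prod (fun k hk => inv_nonneg.2 (by linarith [(hfactor k hk).2]))
          fun k hk => inv_one_sub_le_exp_two_mul (hfactor k hk).1 (hfactor k hk).2
    _ = exp (2 * ∑ k ∈ s, ((k : ℝ) ^ 2)⁻¹) := by simp only [← exp_sum, mul_sum, one_div]
    _ ≤ exp (2 / m) := by
        rw [div_eq_mul_inv]
        gcongr
        exact sum_inv_sq_le_inv_of_forall_lt hm hs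

theorem tprod_inv_one_sub_inv_sq_le_exp {m : ℕ} (hm : m ≠ 0) (S : Set ℕ)
    (hS : ∀ k ∈ S, m < k) : ∏' k : S, (1 - 1 / (k : ℝ) ^ 2)⁻¹ ≤ exp (2 / m) :=
  tprod_le_of_prod_le' (one_le_exp (by positivity)) fun s => by
    simpa only [prod_map, Function.Embedding.coe_subtype] using
      prod_inv_one_sub_inv_sq_le_exp hm (s := s.map (Function.Embedding.subtype _))
        (by simpa using fun k hk _ => hS k hk)

theorem tail_prod_le_general (n : ℕ) :
    (∏' p : {p : ℕ // p.Prime ∧ nthPrime n < p}, (1 - 1/((p : ℕ) : ℝ)^2)⁻¹)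
      ≤ Real.exp (2 / nthPrime n) :=
  tprod_inv_one_sub_inv_sq_le_exp (Nat.prime_nth_prime _).ne_zero
    {p | p.Prime ∧ nthPrime n < p} fun _ hp => hp.2

theorem tail_prod_le (n : ℕ) (hn : 2 ≤ n) :
    (∏' p : {p : ℕ // p.Prime ∧ nthPrime n < p}, (1 - 1/((p : ℕ) : ℝ)^2)⁻¹)
      ≤ Real.exp (2 / nthPrime n) :=
  tail_prod_le_general n
end

section
/- For all real x ≥ 2, log g(x) ≥ log f(x) − 2/x, where g(x) = (e^γ/ζ(2))·log θ(x)·∏_{p ≤ x}(1 + 1/p)^{-1} and f(x) = e^γ·log θ(x)·∏_{p ≤ x}(1 − 1/p), and θ(x) = ∑_{p ≤ x} log p is Chebyshev's first function (assume θ(x) > 1 so both logarithms are defined and the quantities positive). -/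
open Finset Real Filter

/-- Chebyshev's first function `θ(x) = ∑_{p ≤ x} log p`. -/
noncomputable def chebTheta (x : ℝ) : ℝ :=
  ∑ p ∈ (Finset.range (⌊x⌋₊ + 1)).filter Nat.Prime, Real.log p

noncomputable def gfun (x : ℝ) : ℝ :=
  Real.exp Real.eulerMascheroniConstant / (Real.pi^2 / 6) * Real.log (chebTheta x)
    * ∏ p ∈ (Finset.range (⌊x⌋₊ + 1)).filter Nat.Prime, (1 + 1/(p:ℝ))⁻¹

noncomputable def ffun (x : ℝ) : ℝ :=
  Real.exp Real.eulerMascheroniConstant * Real.log (chebTheta x)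
    * ∏ p ∈ (Finset.range (⌊x⌋₊ + 1)).filter Nat.Prime, (1 - 1/(p:ℝ))

/-!
Since `1 - 1/p² = (1 - 1/p)(1 + 1/p)`, we have `g(x) = f(x) / (ζ(2) ∏_{p ≤ x} (1 - 1/p²))`, so it
suffices that `ζ(2) ∏_{p ≤ x} (1 - 1/p²) ≤ exp (2/x)`. With `N = ⌊x⌋`, expanding the Euler product
gives `∏_{p ≤ N} (1 - 1/p²)⁻¹ ≥ ∑_{n ≤ N} 1/n² ≥ ζ(2) - 1/N`, hence
`ζ(2) ∏_{p ≤ N} (1 - 1/p²) ≤ 1 + 1/(ζ(2) N - 1) ≤ exp (1/(ζ(2) N - 1))`, and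
`1/(ζ(2) N - 1) ≤ 2/x` because `x < N + 1 ≤ 2 (ζ(2) N - 1)`.
-/

lemma sum_range_le_prod_primesBelow_inv_one_sub (f : ℕ →*₀ ℝ) (hf : ∀ n, 0 ≤ f n)
    (hsum : Summable f) (N : ℕ) :
    ∑ n ∈ range N, f n ≤ ∏ p ∈ N.primesBelow, (1 - f p)⁻¹ := by
  have hprod := EulerProduct.prod_primesBelow_geometric_eq_tsum_smoothNumbers
    (f := (f : ℕ →* ℝ)) hsum N
  simp only [MonoidHom.coe_coe] at hprod
  rw [hprod, _root_.tsum_subtype]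
  have hsmooth : ∀ n ∈ range N, f n = N.smoothNumbers.indicator f n := by
    intro n hn
    rcases Nat.eq_zero_or_pos n with rfl | hn0
    · simp [Set.indicator_apply]
    · exact (Set.indicator_of_mem (Nat.mem_smoothNumbers_of_lt hn0 (mem_range.1 hn)) _).symm
  rw [sum_congr rfl hsmooth]
  exact (hsum.indicator _).sum_le_tsum _ fun n _ => Set.indicator_nonneg (fun n _ => hf n) n

lemma pi_sq_div_six_sub_inv_le_sum_range (N : ℕ) (hN : N ≠ 0) :
    π ^ 2 / 6 - 1 / N ≤ ∑ n ∈ range (N + 1), ((n : ℝ) ^ 2)⁻¹ := by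
  have hζ : HasSum (fun n : ℕ => ((n : ℝ) ^ 2)⁻¹) (π ^ 2 / 6) := by
    simpa only [one_div] using hasSum_zeta_two
  suffices π ^ 2 / 6 ≤ ∑ n ∈ range (N + 1), ((n : ℝ) ^ 2)⁻¹ + 1 / N by linarith
  rw [← hζ.tsum_eq]
  refine hζ.summable.tsum_le_of_sum_range_le fun m => ?_
  rcases le_total m (N + 1) with hm | hm
  · grw [sum_le_sum_of_subset_of_nonneg (range_mono hm) fun n _ _ => by positivity]
    exact le_add_of_nonneg_right (by positivity)
  · rw [← sum_range_add_sum_Ico _ hm]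
    gcongr
    calc ∑ n ∈ Ico (N + 1) m, ((n : ℝ) ^ 2)⁻¹
        ≤ ∑ n ∈ Ioc N m, ((n : ℝ) ^ 2)⁻¹ :=
          sum_le_sum_of_subset_of_nonneg (fun n => by simp only [mem_Ico, mem_Ioc]; omega)
            fun n _ _ => by positivity
      _ ≤ (N : ℝ)⁻¹ - (m : ℝ)⁻¹ := sum_Ioc_inv_sq_le_sub hN (by omega)
      _ ≤ 1 / N := by rw [one_div]; exact sub_le_self _ (by positivity)

lemma pi_sq_div_six_sub_inv_le_prod_primesBelow (N : ℕ) (hN : N ≠ 0) :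
    π ^ 2 / 6 - 1 / N ≤ ∏ p ∈ (N + 1).primesBelow, (1 - ((p : ℝ) ^ 2)⁻¹)⁻¹ := by
  let f : ℕ →*₀ ℝ := invMonoidWithZeroHom.comp
    ((powMonoidWithZeroHom two_ne_zero).comp (Nat.castRingHom ℝ).toMonoidWithZeroHom)
  have hf : ∀ n, f n = ((n : ℝ) ^ 2)⁻¹ := fun _ => rfl
  have hEuler := sum_range_le_prod_primesBelow_inv_one_sub f (fun n => by rw [hf]; positivity)
    (by simpa only [funext hf, one_div] using hasSum_zeta_two.summable) (N + 1)
  simp only [hf] at hEuler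
  exact (pi_sq_div_six_sub_inv_le_sum_range N hN).trans hEuler

lemma prod_one_sub_inv_sq_pos (s : Finset ℕ) (hs : ∀ p ∈ s, p.Prime) :
    0 < ∏ p ∈ s, (1 - ((p : ℝ) ^ 2)⁻¹) :=
  prod_pos fun p hp => by
    have hp2 : (2 : ℝ) ≤ p := by exact_mod_cast (hs p hp).two_le
    have : ((p : ℝ) ^ 2)⁻¹ < 1 := inv_lt_one_of_one_lt₀ (by nlinarith)
    linarith

lemma prod_one_sub_inv_sq_eq_mul (s : Finset ℕ) :
    ∏ p ∈ s, (1 - ((p : ℝ) ^ 2)⁻¹) =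
      (∏ p ∈ s, (1 - 1 / (p : ℝ))) * ∏ p ∈ s, (1 + 1 / (p : ℝ)) := by
  rw [← prod_mul_distrib]
  exact prod_congr rfl fun p _ => by ring

lemma pi_sq_div_six_mul_prod_one_sub_inv_sq_le_exp (x : ℝ) (hx : 2 ≤ x) :
    π ^ 2 / 6 * ∏ p ∈ (range (⌊x⌋₊ + 1)).filter Nat.Prime, (1 - ((p : ℝ) ^ 2)⁻¹)
      ≤ exp (2 / x) := by
  set N := ⌊x⌋₊
  set Q := ∏ p ∈ (range (N + 1)).filter Nat.Prime, (1 - ((p : ℝ) ^ 2)⁻¹)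
  set ζ : ℝ := π ^ 2 / 6
  have hN2 : 2 ≤ N := Nat.le_floor (by exact_mod_cast hx)
  have hN : (2 : ℝ) ≤ N := by exact_mod_cast hN2
  have hxN : x < N + 1 := Nat.lt_floor_add_one x
  have hζ : 3 / 2 < ζ := by have := pi_gt_three; simp only [ζ]; nlinarith
  have hζN : 0 < ζ * N - 1 := by nlinarith
  have hQ : 0 < Q := prod_one_sub_inv_sq_pos _ fun p hp => (mem_filter.1 hp).2
  have hQinv : ζ - 1 / N ≤ Q⁻¹ := by
    have h := pi_sq_div_six_sub_inv_le_prod_primesBelow N (by omega)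
    rwa [prod_inv_distrib] at h
  have hQle : Q ≤ (ζ - 1 / N)⁻¹ :=
    (le_inv_comm₀ hQ (by rw [sub_pos, div_lt_iff₀ (by positivity)]; linarith)).2 hQinv
  have hexp : 1 / (ζ * N - 1) ≤ 2 / x := by
    rw [div_le_div_iff₀ hζN (by linarith)]
    nlinarith
  calc ζ * Q ≤ ζ * (ζ - 1 / N)⁻¹ := by gcongr
    _ = 1 / (ζ * N - 1) + 1 := by
      rw [show ζ - 1 / N = (ζ * N - 1) / N by field_simp, inv_div]
      field_simp
      ring
    _ ≤ exp (1 / (ζ * N - 1)) := add_one_le_exp _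
    _ ≤ exp (2 / x) := exp_le_exp.2 hexp

lemma gfun_eq_ffun_div (x : ℝ) :
    gfun x = ffun x /
      (π ^ 2 / 6 * ∏ p ∈ (range (⌊x⌋₊ + 1)).filter Nat.Prime, (1 - ((p : ℝ) ^ 2)⁻¹)) := by
  have hQ := prod_one_sub_inv_sq_pos ((range (⌊x⌋₊ + 1)).filter Nat.Prime)
    fun p hp => (mem_filter.1 hp).2
  rw [prod_one_sub_inv_sq_eq_mul] at hQ ⊢
  obtain ⟨hPf, hPp⟩ := mul_ne_zero_iff.1 hQ.ne'
  rw [gfun, ffun, prod_inv_distrib]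
  field_simp

theorem log_g_ge (x : ℝ) (hx : 2 ≤ x) (hθ : 1 < chebTheta x) :
    Real.log (gfun x) ≥ Real.log (ffun x) - 2 / x := by
  set S := (range (⌊x⌋₊ + 1)).filter Nat.Prime
  have hS : ∀ p ∈ S, p.Prime := fun p hp => (mem_filter.1 hp).2
  have hQ : 0 < π ^ 2 / 6 * ∏ p ∈ S, (1 - ((p : ℝ) ^ 2)⁻¹) :=
    mul_pos (by positivity) (prod_one_sub_inv_sq_pos S hS)
  have hf : ffun x ≠ 0 := by
    have hP := (prod_one_sub_inv_sq_pos S hS).ne'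
    rw [prod_one_sub_inv_sq_eq_mul] at hP
    exact mul_ne_zero (mul_ne_zero (exp_pos _).ne' (log_pos hθ).ne') (left_ne_zero_of_mul hP)
  rw [gfun_eq_ffun_div, log_div hf hQ.ne']
  linarith [(log_le_iff_le_exp hQ).2 (pi_sq_div_six_mul_prod_one_sub_inv_sq_le_exp x hx)]
end
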